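/- arXiv:math/0112049 — 3 statements merged into one kernel-verified Lean document; each statement's English description precedes it below -/
import Mathlib

section
/- Let (Λ,d) be a k-graph and let e = (1,…,1) ∈ ℕ^k. Suppose (λ_j)_{j∈ℕ} is a family of morphisms with λ_j ∈ Λ^{2je} such that for every j ∈ ℕ there exist μ,ν ∈ Λ^e with λ_{j+1} = μ λ_j ν. Then there exists a unique x ∈ Λ^Δ with x(−je, je) = λ_j for all j ∈ ℕ. -/
open scoped Classical
open TopologicalSpace MeasureTheory

/-- A `k`-graph: a countable small category with a degree functor to `ℕ^k`
satisfying the unique factorisation property.  Objects are identified with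
the degree-zero morphisms. -/
structure KGraph (k : ℕ) where
  Mor : Type
  countable : Countable Mor
  src : Mor → Mor
  rng : Mor → Mor
  deg : Mor → Fin k → ℕ
  comp : (lam mu : Mor) → src lam = rng mu → Mor
  deg_src : ∀ lam, deg (src lam) = 0
  deg_rng : ∀ lam, deg (rng lam) = 0
  src_obj : ∀ v, deg v = 0 → src v = v
  rng_obj : ∀ v, deg v = 0 → rng v = v
  src_comp : ∀ lam mu h, src (comp lam mu h) = src mu
  rng_comp : ∀ lam mu h, rng (comp lam mu h) = rng lam
  deg_comp : ∀ lam mu h, deg (comp lam mu h) = deg lam + deg mu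
  id_comp : ∀ lam (h : src (rng lam) = rng lam), comp (rng lam) lam h = lam
  comp_id : ∀ lam (h : src lam = rng (src lam)), comp lam (src lam) h = lam
  assoc : ∀ l m n (h1 : src l = rng m) (h2 : src m = rng n)
      (h3 : src (comp l m h1) = rng n) (h4 : src l = rng (comp m n h2)),
      comp (comp l m h1) n h3 = comp l (comp m n h2) h4
  factor : ∀ lam (n1 n2 : Fin k → ℕ), deg lam = n1 + n2 →
      ∃! p : Mor × Mor, deg p.1 = n1 ∧ deg p.2 = n2 ∧
        ∃ h : src p.1 = rng p.2, comp p.1 p.2 h = lam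

namespace KGraph

variable {k : ℕ}

/-- The vertices (objects) of a `k`-graph are the degree-zero morphisms. -/
def IsVertex (Λ : KGraph k) (v : Λ.Mor) : Prop := Λ.deg v = 0

/-- Standing assumption (★): for each `p ∈ ℕ^k` the restrictions of `r` and `s`
to `Λ^p` are surjective (onto the vertices) and finite-to-one. -/
def Star (Λ : KGraph k) : Prop :=
  ∀ p : Fin k → ℕ,
    (∀ v, Λ.IsVertex v →
      (∃ lam, Λ.deg lam = p ∧ Λ.rng lam = v) ∧
      (∃ lam, Λ.deg lam = p ∧ Λ.src lam = v)) ∧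
    (∀ v, Λ.IsVertex v →
      {lam | Λ.deg lam = p ∧ Λ.rng lam = v}.Finite ∧
      {lam | Λ.deg lam = p ∧ Λ.src lam = v}.Finite)

/-- Irreducibility (strong connectedness) of a `k`-graph. -/
def Irreducible (Λ : KGraph k) : Prop :=
  ∀ u v, Λ.IsVertex u → Λ.IsVertex v →
    ∃ lam, Λ.deg lam ≠ 0 ∧ Λ.rng lam = u ∧ Λ.src lam = v

/-- Primitivity of a `k`-graph. -/
def Primitive (Λ : KGraph k) : Prop :=
  ∃ p : Fin k → ℕ, p ≠ 0 ∧ ∀ u v, Λ.IsVertex u → Λ.IsVertex v →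
    ∃ lam, Λ.deg lam = p ∧ Λ.rng lam = u ∧ Λ.src lam = v

/-- The degree of a morphism, viewed in `ℤ^k`. -/
def degZ (Λ : KGraph k) (lam : Λ.Mor) : Fin k → ℤ := fun i => (Λ.deg lam i : ℤ)

/-- The number of morphisms of degree `p` with range `u` and source `v`. -/
noncomputable def count (Λ : KGraph k) (p : Fin k → ℕ) (u v : Λ.Mor) : ℕ :=
  Nat.card {lam : Λ.Mor // Λ.deg lam = p ∧ Λ.rng lam = u ∧ Λ.src lam = v}

end KGraph

/-- A two-sided infinite path in a `k`-graph: a degree-preserving functor from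
the `k`-graph `Δ = {(m,n) ∈ ℤ^k × ℤ^k : m ≤ n}` to `Λ`. -/
structure TwoSidedPath {k : ℕ} (Λ : KGraph k) where
  toFun : ∀ m n : Fin k → ℤ, m ≤ n → Λ.Mor
  deg_eq : ∀ m n (h : m ≤ n) (i : Fin k), (Λ.deg (toFun m n h) i : ℤ) = n i - m i
  src_eq : ∀ m n (h : m ≤ n), Λ.src (toFun m n h) = toFun n n le_rfl
  rng_eq : ∀ m n (h : m ≤ n), Λ.rng (toFun m n h) = toFun m m le_rfl
  comp_eq : ∀ l m n (h1 : l ≤ m) (h2 : m ≤ n),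
      Λ.comp (toFun l m h1) (toFun m n h2)
        ((src_eq l m h1).trans (rng_eq m n h2).symm) = toFun l n (h1.trans h2)

/-- A one-sided infinite path in a `k`-graph: a degree-preserving functor from
the `k`-graph `Ω = {(m,n) ∈ ℕ^k × ℕ^k : m ≤ n}` to `Λ`. -/
structure OneSidedPath {k : ℕ} (Λ : KGraph k) where
  toFun : ∀ m n : Fin k → ℕ, m ≤ n → Λ.Mor
  deg_eq : ∀ m n (h : m ≤ n) (i : Fin k), Λ.deg (toFun m n h) i = n i - m i
  src_eq : ∀ m n (h : m ≤ n), Λ.src (toFun m n h) = toFun n n le_rfl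
  rng_eq : ∀ m n (h : m ≤ n), Λ.rng (toFun m n h) = toFun m m le_rfl
  comp_eq : ∀ l m n (h1 : l ≤ m) (h2 : m ≤ n),
      Λ.comp (toFun l m h1) (toFun m n h2)
        ((src_eq l m h1).trans (rng_eq m n h2).symm) = toFun l n (h1.trans h2)

namespace TwoSidedPath

variable {k : ℕ} {Λ : KGraph k}

theorem toFun_congr (x : TwoSidedPath Λ) {m n m' n' : Fin k → ℤ}
    (hm : m = m') (hn : n = n') (h : m ≤ n) (h' : m' ≤ n') :
    x.toFun m n h = x.toFun m' n' h' := by subst hm; subst hn; rfl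

/-- The vertex `x(0)` of a two-sided path. -/
def obj0 (x : TwoSidedPath Λ) : Λ.Mor := x.toFun 0 0 le_rfl

end TwoSidedPath

theorem le_add_degZ {k : ℕ} (Λ : KGraph k) (n : Fin k → ℤ) (lam : Λ.Mor) :
    n ≤ n + Λ.degZ lam :=
  Pi.le_def.mpr fun i => by
    show n i ≤ n i + (Λ.deg lam i : ℤ); omega

/-- The cylinder set `Z(λ, n) = {x ∈ Λ^Δ : x(n, n + d(λ)) = λ}`. -/
def ZCyl {k : ℕ} (Λ : KGraph k) (lam : Λ.Mor) (n : Fin k → ℤ) :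
    Set (TwoSidedPath Λ) :=
  {x | x.toFun n (n + Λ.degZ lam) (le_add_degZ Λ n lam) = lam}

/-- The topology on `Λ^Δ` generated by the cylinder sets. -/
instance {k : ℕ} (Λ : KGraph k) : TopologicalSpace (TwoSidedPath Λ) :=
  TopologicalSpace.generateFrom {S | ∃ lam n, S = ZCyl Λ lam n}

noncomputable instance {k : ℕ} (Λ : KGraph k) : MeasurableSpace (TwoSidedPath Λ) :=
  borel _

/-- The one-sided cylinder set `Z(λ) = {x ∈ Λ^Ω : x(0, d(λ)) = λ}`. -/
def OCyl {k : ℕ} (Λ : KGraph k) (lam : Λ.Mor) : Set (OneSidedPath Λ) :=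
  {x | x.toFun 0 (Λ.deg lam) (Pi.le_def.mpr fun _ => Nat.zero_le _) = lam}

/-- The topology on `Λ^Ω` generated by the cylinder sets. -/
instance {k : ℕ} (Λ : KGraph k) : TopologicalSpace (OneSidedPath Λ) :=
  TopologicalSpace.generateFrom {S | ∃ lam, S = OCyl Λ lam}

/-- The shift `σ^n` on the two-sided path space, for `n ∈ ℤ^k`. -/
def TwoSidedPath.shift {k : ℕ} {Λ : KGraph k} (n : Fin k → ℤ)
    (x : TwoSidedPath Λ) : TwoSidedPath Λ where
  toFun l m h := x.toFun (l + n) (m + n) (add_le_add_left h n)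
  deg_eq l m h i := by
    show (Λ.deg (x.toFun (l + n) (m + n) (add_le_add_left h n)) i : ℤ) = m i - l i
    have h' := x.deg_eq (l + n) (m + n) (add_le_add_left h n) i
    simp only [Pi.add_apply] at h'
    omega
  src_eq l m h := x.src_eq (l + n) (m + n) (add_le_add_left h n)
  rng_eq l m h := x.rng_eq (l + n) (m + n) (add_le_add_left h n)
  comp_eq l m m' h1 h2 :=
    x.comp_eq (l + n) (m + n) (m' + n) (add_le_add_left h1 n) (add_le_add_left h2 n)

/-- The shift `σ^p` on the one-sided path space, for `p ∈ ℕ^k`. -/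
def OneSidedPath.shift {k : ℕ} {Λ : KGraph k} (p : Fin k → ℕ)
    (x : OneSidedPath Λ) : OneSidedPath Λ where
  toFun l m h := x.toFun (l + p) (m + p) (add_le_add_left h p)
  deg_eq l m h i := by
    show Λ.deg (x.toFun (l + p) (m + p) (add_le_add_left h p)) i = m i - l i
    have h' := x.deg_eq (l + p) (m + p) (add_le_add_left h p) i
    simp only [Pi.add_apply] at h'
    omega
  src_eq l m h := x.src_eq (l + p) (m + p) (add_le_add_left h p)
  rng_eq l m h := x.rng_eq (l + p) (m + p) (add_le_add_left h p)
  comp_eq l m m' h1 h2 :=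
    x.comp_eq (l + p) (m + p) (m' + p) (add_le_add_left h1 p) (add_le_add_left h2 p)

/-- The vector `(j, …, j) ∈ ℤ^k`, i.e. `j·e` where `e = (1,…,1)`. -/
def jvecZ (k : ℕ) (j : ℕ) : Fin k → ℤ := fun _ => (j : ℤ)

theorem neg_jvecZ_le (k j : ℕ) : -(jvecZ k j) ≤ jvecZ k j :=
  Pi.le_def.mpr fun _ => by show -((j : ℤ)) ≤ (j : ℤ); omega

/-- Coercion `ℕ^k → ℤ^k`. -/
def coeZ {k : ℕ} (p : Fin k → ℕ) : Fin k → ℤ := fun i => (p i : ℤ)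

theorem coeZ_le_coeZ {k : ℕ} {m n : Fin k → ℕ} (h : m ≤ n) : coeZ m ≤ coeZ n :=
  Pi.le_def.mpr fun i => by
    show ((m i : ℤ)) ≤ (n i : ℤ)
    exact_mod_cast Pi.le_def.mp h i

theorem neg_coeZ_le {k : ℕ} (m : Fin k → ℕ) : -(coeZ m) ≤ coeZ m :=
  Pi.le_def.mpr fun i => by show -((m i : ℤ)) ≤ (m i : ℤ); omega

/-- The quantity `h(x,y) ∈ ℕ∞`:  `0` if `x(0) ≠ y(0)`, and otherwise
`1 + sup { j : x(-je, je) = y(-je, je) }`. -/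
noncomputable def hdist {k : ℕ} {Λ : KGraph k} (x y : TwoSidedPath Λ) : ℕ∞ :=
  if x.obj0 = y.obj0 then
    1 + sSup {c : ℕ∞ | ∃ j : ℕ, c = (j : ℕ∞) ∧
        x.toFun (-(jvecZ k j)) (jvecZ k j) (neg_jvecZ_le k j) =
        y.toFun (-(jvecZ k j)) (jvecZ k j) (neg_jvecZ_le k j)}
  else 0

/-- The metric `ρ(x,y) = r^{h(x,y)}`, with `r^∞ = 0`. -/
noncomputable def rho {k : ℕ} {Λ : KGraph k} (r : ℝ) (x y : TwoSidedPath Λ) : ℝ :=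
  if hdist x y = ⊤ then 0 else r ^ (hdist x y).toNat

/-- The local contracting set `E_x`. -/
def Ex {k : ℕ} {Λ : KGraph k} (x : TwoSidedPath Λ) : Set (TwoSidedPath Λ) :=
  {y | ∀ m n (h : m ≤ n), 0 ≤ m → y.toFun m n h = x.toFun m n h}

/-- The local expanding set `F_x`. -/
def Fx {k : ℕ} {Λ : KGraph k} (x : TwoSidedPath Λ) : Set (TwoSidedPath Λ) :=
  {y | ∀ m n (h : m ≤ n), n ≤ 0 → y.toFun m n h = x.toFun m n h}

/-- The restriction map `π : Λ^Δ → Λ^Ω`. -/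
def TwoSidedPath.restrict {k : ℕ} {Λ : KGraph k} (x : TwoSidedPath Λ) :
    OneSidedPath Λ where
  toFun m n h := x.toFun (coeZ m) (coeZ n) (coeZ_le_coeZ h)
  deg_eq m n h i := by
    show Λ.deg (x.toFun (coeZ m) (coeZ n) (coeZ_le_coeZ h)) i = n i - m i
    have h' := x.deg_eq (coeZ m) (coeZ n) (coeZ_le_coeZ h) i
    simp only [coeZ] at h'
    omega
  src_eq m n h := x.src_eq (coeZ m) (coeZ n) (coeZ_le_coeZ h)
  rng_eq m n h := x.rng_eq (coeZ m) (coeZ n) (coeZ_le_coeZ h)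
  comp_eq l m n h1 h2 :=
    x.comp_eq (coeZ l) (coeZ m) (coeZ n) (coeZ_le_coeZ h1) (coeZ_le_coeZ h2)

/-- Stable equivalence: `x ∼ₛ y` iff the two paths eventually agree to the right. -/
def SRel {k : ℕ} {Λ : KGraph k} (x y : TwoSidedPath Λ) : Prop :=
  ∃ m : Fin k → ℤ, ∀ n (h : m ≤ n), x.toFun m n h = y.toFun m n h

/-- Unstable equivalence: `x ∼ᵤ y` iff the two paths eventually agree to the left. -/
def URel {k : ℕ} {Λ : KGraph k} (x y : TwoSidedPath Λ) : Prop :=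
  ∃ n : Fin k → ℤ, ∀ m (h : m ≤ n), x.toFun m n h = y.toFun m n h

/-- Asymptotic equivalence: `x ∼ₐ y` iff `x ∼ₛ y` and `x ∼ᵤ y`. -/
def ARel {k : ℕ} {Λ : KGraph k} (x y : TwoSidedPath Λ) : Prop :=
  ∃ m : Fin k → ℕ, ∀ n : Fin k → ℤ, coeZ m ≤ n →
    (∀ h : coeZ m ≤ n, x.toFun (coeZ m) n h = y.toFun (coeZ m) n h) ∧
    (∀ h' : -n ≤ -(coeZ m), x.toFun (-n) (-(coeZ m)) h' = y.toFun (-n) (-(coeZ m)) h')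

/-- The groupoid `G_{s,m}` of pairs agreeing from `m ∈ ℤ^k` onwards. -/
def Gsm {k : ℕ} (Λ : KGraph k) (m : Fin k → ℤ) :
    Set (TwoSidedPath Λ × TwoSidedPath Λ) :=
  {p | ∀ n (h : m ≤ n), p.1.toFun m n h = p.2.toFun m n h}

theorem TwoSidedPath.self_mem_cyl {k : ℕ} {Λ : KGraph k} (x : TwoSidedPath Λ)
    (m n : Fin k → ℤ) (h : m ≤ n) : x ∈ ZCyl Λ (x.toFun m n h) m := by
  show x.toFun m (m + Λ.degZ (x.toFun m n h)) _ = x.toFun m n h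
  apply x.toFun_congr rfl
  funext i
  show m i + (Λ.deg (x.toFun m n h) i : ℤ) = n i
  have h' := x.deg_eq m n h i
  omega

theorem degZ_obj0 {k : ℕ} {Λ : KGraph k} (x : TwoSidedPath Λ) :
    Λ.degZ x.obj0 = 0 := by
  funext i
  show (Λ.deg (x.toFun 0 0 le_rfl) i : ℤ) = 0
  have h' := x.deg_eq 0 0 le_rfl i
  simp only [Pi.zero_apply] at h'
  omega

theorem mem_vertex_cyl {k : ℕ} {Λ : KGraph k} {x z : TwoSidedPath Λ}
    (hz : z ∈ ZCyl Λ x.obj0 0) : z.obj0 = x.obj0 := by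
  have h0 : (0 : Fin k → ℤ) = 0 + Λ.degZ x.obj0 := by rw [degZ_obj0]; simp
  calc z.obj0 = z.toFun 0 (0 + Λ.degZ x.obj0) (le_add_degZ Λ 0 x.obj0) :=
        z.toFun_congr rfl h0 le_rfl (le_add_degZ Λ 0 x.obj0)
    _ = x.obj0 := hz

/-!
Write `λ(a, a + p)` for the factor of degree `p` of `λ` that starts at position `a`; it is
unique by the factorisation property. Because `λ_{j+1} = μ λ_j ν` with `d(μ) = e`, the segment
`λ_j(a, b)` reappears as `λ_{j+1}(a + e, b + e)`, so for `-je ≤ m ≤ n ≤ je` the morphism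
`x(m, n) := λ_j(m + je, n + je)` does not depend on `j`. Functoriality of `x` reduces to that of
segments inside a single `λ_j`, and every path `y` with `y(-je, je) = λ_j` factors as
`y(-je, m) y(m, n) y(n, je)`, which forces `y(m, n) = x(m, n)`.
-/

namespace KGraph

variable {k : ℕ} {Λ : KGraph k}

theorem comp_congr {a a' b b' : Λ.Mor} (ha : a = a') (hb : b = b')
    (h : Λ.src a = Λ.rng b) (h' : Λ.src a' = Λ.rng b') :
    Λ.comp a b h = Λ.comp a' b' h' := by
  subst ha hb; rfl

theorem eq_of_comp_eq_comp {a b a' b' : Λ.Mor} {h : Λ.src a = Λ.rng b}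
    {h' : Λ.src a' = Λ.rng b'} (he : Λ.comp a b h = Λ.comp a' b' h')
    (hd : Λ.deg a = Λ.deg a') : a = a' ∧ b = b' := by
  have hdb : Λ.deg b = Λ.deg b' := by
    have := congrArg Λ.deg he
    rw [Λ.deg_comp, Λ.deg_comp, hd] at this
    exact add_left_cancel this
  obtain ⟨_, _, huniq⟩ := Λ.factor (Λ.comp a b h) (Λ.deg a) (Λ.deg b) (Λ.deg_comp a b h)
  have e := (huniq (a, b) ⟨rfl, rfl, h, rfl⟩).trans
    (huniq (a', b') ⟨hd.symm, hdb.symm, h', he.symm⟩).symm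
  exact Prod.ext_iff.mp e

/-- `σ` is the segment `lam(a, a + d(σ))` of `lam`. -/
def OccursAt (Λ : KGraph k) (lam : Λ.Mor) (a : Fin k → ℕ) (σ : Λ.Mor) : Prop :=
  ∃ (α γ : Λ.Mor) (h1 : Λ.src σ = Λ.rng γ) (h2 : Λ.src α = Λ.rng (Λ.comp σ γ h1)),
    Λ.deg α = a ∧ Λ.comp α (Λ.comp σ γ h1) h2 = lam

theorem comp_vertex_left {v μ : Λ.Mor} (hv : Λ.deg v = 0) (h : Λ.src v = Λ.rng μ) :
    Λ.comp v μ h = μ := by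
  have hvμ : v = Λ.rng μ := (Λ.src_obj v hv).symm.trans h
  subst hvμ
  exact Λ.id_comp μ h

theorem comp_vertex_right {μ v : Λ.Mor} (hv : Λ.deg v = 0) (h : Λ.src μ = Λ.rng v) :
    Λ.comp μ v h = μ := by
  have hvμ : v = Λ.src μ := (Λ.rng_obj v hv).symm.trans h.symm
  subst hvμ
  exact Λ.comp_id μ h

theorem occursAt_self (lam : Λ.Mor) : Λ.OccursAt lam 0 lam := by
  have h1 : Λ.src lam = Λ.rng (Λ.src lam) := (Λ.rng_obj _ (Λ.deg_src lam)).symm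
  have hid : Λ.comp lam (Λ.src lam) h1 = lam := comp_vertex_right (Λ.deg_src lam) h1
  have h2 : Λ.src (Λ.rng lam) = Λ.rng lam := Λ.src_obj _ (Λ.deg_rng lam)
  refine ⟨Λ.rng lam, Λ.src lam, h1, by rwa [hid], Λ.deg_rng lam, ?_⟩
  exact (comp_congr rfl hid _ h2).trans (comp_vertex_left (Λ.deg_rng lam) h2)

theorem exists_occursAt (lam : Λ.Mor) {a p : Fin k → ℕ} (h : a + p ≤ Λ.deg lam) :
    ∃ σ, Λ.deg σ = p ∧ Λ.OccursAt lam a σ := by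
  obtain ⟨c, hc⟩ := exists_add_of_le h
  obtain ⟨⟨α, τ⟩, ⟨hα, hτ, h2, hατ⟩, -⟩ := Λ.factor lam a (p + c) (by rw [hc, add_assoc])
  obtain ⟨⟨σ, γ⟩, ⟨hσ, -, h1, hσγ⟩, -⟩ := Λ.factor τ p c hτ
  dsimp only at *
  subst hσγ
  exact ⟨σ, hσ, α, γ, h1, h2, hα, hατ⟩

namespace OccursAt

variable {lam σ τ : Λ.Mor} {a : Fin k → ℕ}

theorem unique {σ' : Λ.Mor} (h : Λ.OccursAt lam a σ) (h' : Λ.OccursAt lam a σ')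
    (hd : Λ.deg σ = Λ.deg σ') : σ = σ' := by
  obtain ⟨α, γ, h1, h2, hα, rfl⟩ := h
  obtain ⟨α', γ', h1', h2', hα', he⟩ := h'
  exact (eq_of_comp_eq_comp (eq_of_comp_eq_comp he.symm (hα.trans hα'.symm)).2 hd).1

theorem rng (h : Λ.OccursAt lam a σ) : Λ.OccursAt lam a (Λ.rng σ) := by
  obtain ⟨α, γ, h1, h2, hα, hlam⟩ := h
  have h1' : Λ.src (Λ.rng σ) = Λ.rng (Λ.comp σ γ h1) :=
    (Λ.src_obj _ (Λ.deg_rng σ)).trans (Λ.rng_comp σ γ h1).symm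
  have hid : Λ.comp (Λ.rng σ) (Λ.comp σ γ h1) h1' = Λ.comp σ γ h1 :=
    comp_vertex_left (Λ.deg_rng σ) h1'
  refine ⟨α, Λ.comp σ γ h1, h1', by rwa [hid], hα, ?_⟩
  exact (comp_congr rfl hid _ h2).trans hlam

theorem src (h : Λ.OccursAt lam a σ) :
    Λ.OccursAt lam (a + Λ.deg σ) (Λ.src σ) := by
  obtain ⟨α, γ, h1, h2, hα, hlam⟩ := h
  have h5 : Λ.src α = Λ.rng σ := h2.trans (Λ.rng_comp σ γ h1)
  have h3 : Λ.src (Λ.comp α σ h5) = Λ.rng γ := (Λ.src_comp α σ h5).trans h1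
  have h1' : Λ.src (Λ.src σ) = Λ.rng γ := (Λ.src_obj _ (Λ.deg_src σ)).trans h1
  have hid : Λ.comp (Λ.src σ) γ h1' = γ := comp_vertex_left (Λ.deg_src σ) h1'
  refine ⟨Λ.comp α σ h5, γ, h1', by rwa [hid], by rw [Λ.deg_comp, hα], ?_⟩
  exact (comp_congr rfl hid _ h3).trans ((Λ.assoc α σ γ h5 h1 h3 h2).trans hlam)

theorem comp (hσ : Λ.OccursAt lam a σ) (hτ : Λ.OccursAt lam (a + Λ.deg σ) τ) :
    ∃ h, Λ.OccursAt lam a (Λ.comp σ τ h) := by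
  obtain ⟨α, γ, h1, h2, hα, hlam⟩ := hσ
  obtain ⟨β, δ, h3, h4, hβ, hlam'⟩ := hτ
  have h5 : Λ.src α = Λ.rng σ := h2.trans (Λ.rng_comp σ γ h1)
  have h6 : Λ.src (Λ.comp α σ h5) = Λ.rng γ := (Λ.src_comp α σ h5).trans h1
  have e : Λ.comp (Λ.comp α σ h5) γ h6 = Λ.comp β (Λ.comp τ δ h3) h4 :=
    (Λ.assoc α σ γ h5 h1 h6 h2).trans (hlam.trans hlam'.symm)
  obtain ⟨-, rfl⟩ := eq_of_comp_eq_comp e (by rw [Λ.deg_comp, hα, hβ])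
  have hστ : Λ.src σ = Λ.rng τ := h1.trans (Λ.rng_comp τ δ h3)
  have h7 : Λ.src (Λ.comp σ τ hστ) = Λ.rng δ := (Λ.src_comp σ τ hστ).trans h3
  refine ⟨hστ, α, δ, h7, by rwa [Λ.rng_comp, Λ.rng_comp], hα, ?_⟩
  exact (comp_congr rfl (Λ.assoc σ τ δ hστ h3 h7 h1) _ h2).trans hlam

theorem comp_left (μ : Λ.Mor) (hμ : Λ.src μ = Λ.rng lam) (h : Λ.OccursAt lam a σ) :
    Λ.OccursAt (Λ.comp μ lam hμ) (Λ.deg μ + a) σ := by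
  obtain ⟨α, γ, h1, h2, hα, rfl⟩ := h
  have h5 : Λ.src μ = Λ.rng α := hμ.trans (Λ.rng_comp _ _ h2)
  have h6 : Λ.src (Λ.comp μ α h5) = Λ.rng (Λ.comp σ γ h1) := (Λ.src_comp μ α h5).trans h2
  exact ⟨Λ.comp μ α h5, γ, h1, h6, by rw [Λ.deg_comp, hα], Λ.assoc μ α _ h5 h2 h6 hμ⟩

theorem comp_right (ν : Λ.Mor) (hν : Λ.src lam = Λ.rng ν) (h : Λ.OccursAt lam a σ) :
    Λ.OccursAt (Λ.comp lam ν hν) a σ := by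
  obtain ⟨α, γ, h1, h2, hα, rfl⟩ := h
  have h5 : Λ.src (Λ.comp σ γ h1) = Λ.rng ν := (Λ.src_comp _ _ h2).symm.trans hν
  have hγν : Λ.src γ = Λ.rng ν := (Λ.src_comp σ γ h1).symm.trans h5
  have h1' : Λ.src σ = Λ.rng (Λ.comp γ ν hγν) := h1.trans (Λ.rng_comp γ ν hγν).symm
  have h6 : Λ.src α = Λ.rng (Λ.comp (Λ.comp σ γ h1) ν h5) := h2.trans (Λ.rng_comp _ ν h5).symm
  refine ⟨α, Λ.comp γ ν hγν, h1', by rwa [Λ.rng_comp, ← Λ.rng_comp σ γ h1], hα, ?_⟩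
  exact (comp_congr rfl (Λ.assoc σ γ ν h1 hγν h5 h1').symm _ h6).trans
    (Λ.assoc α _ ν h2 h5 hν h6).symm

end OccursAt

end KGraph

def toNatSub {k : ℕ} (n m : Fin k → ℤ) : Fin k → ℕ := fun i => (n i - m i).toNat

section ToNatSub

variable {k : ℕ} {l m n : Fin k → ℤ}

@[simp]
theorem toNatSub_self (m : Fin k → ℤ) : toNatSub m m = 0 := by
  funext i; simp [toNatSub]

theorem toNatSub_add_toNatSub (hlm : l ≤ m) (hmn : m ≤ n) :
    toNatSub m l + toNatSub n m = toNatSub n l := by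
  funext i
  have : l i ≤ m i := hlm i
  have : m i ≤ n i := hmn i
  simp only [toNatSub, Pi.add_apply]; omega

theorem toNatSub_le_toNatSub (hmn : m ≤ n) : toNatSub m l ≤ toNatSub n l := fun i => by
  have : m i ≤ n i := hmn i
  simp only [toNatSub]; omega

theorem toNatSub_neg_jvecZ_add {j : ℕ} (hm : -(jvecZ k j) ≤ m) (t : ℕ) :
    toNatSub m (-(jvecZ k (j + t))) = toNatSub m (-(jvecZ k j)) + fun _ => t := by
  funext i
  have : -(j : ℤ) ≤ m i := hm i
  simp only [toNatSub, jvecZ, Pi.neg_apply, Pi.add_apply]; omega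

theorem exists_jvecZ_window (m n : Fin k → ℤ) : ∃ j, -(jvecZ k j) ≤ m ∧ n ≤ jvecZ k j := by
  refine ⟨∑ i, ((m i).natAbs + (n i).natAbs), fun i => ?_, fun i => ?_⟩ <;>
  · have := Finset.single_le_sum (f := fun i => (m i).natAbs + (n i).natAbs)
      (fun _ _ => Nat.zero_le _) (Finset.mem_univ i)
    simp only [jvecZ, Pi.neg_apply] at *; omega

end ToNatSub

namespace TwoSidedPath

variable {k : ℕ} {Λ : KGraph k}

theorem toFun_injective : Function.Injective (toFun : TwoSidedPath Λ → _) := by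
  rintro ⟨_⟩ ⟨_⟩ rfl; rfl

theorem deg_toFun (x : TwoSidedPath Λ) {m n : Fin k → ℤ} (h : m ≤ n) :
    Λ.deg (x.toFun m n h) = toNatSub n m := by
  funext i
  have := x.deg_eq m n h i
  simp only [toNatSub]; omega

theorem occursAt_toFun (x : TwoSidedPath Λ) {l m n p : Fin k → ℤ} (hlm : l ≤ m)
    (hmn : m ≤ n) (hnp : n ≤ p) :
    Λ.OccursAt (x.toFun l p (hlm.trans (hmn.trans hnp))) (toNatSub m l) (x.toFun m n hmn) := by
  have hmp := x.comp_eq m n p hmn hnp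
  have h2 : Λ.src (x.toFun l m hlm) = Λ.rng (Λ.comp _ _ ((x.src_eq m n hmn).trans
      (x.rng_eq n p hnp).symm)) := by
    rw [hmp, x.src_eq, x.rng_eq]
  exact ⟨x.toFun l m hlm, x.toFun n p hnp, _, h2, x.deg_toFun hlm,
    (KGraph.comp_congr rfl hmp h2 _).trans (x.comp_eq l m p hlm (hmn.trans hnp))⟩

end TwoSidedPath

namespace KGraph

variable {k : ℕ} {Λ : KGraph k}

def IsUnitExtension (Λ : KGraph k) (lam lam' : Λ.Mor) : Prop :=
  ∃ (mu nu : Λ.Mor) (h1 : Λ.src lam = Λ.rng nu)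
    (h2 : Λ.src mu = Λ.rng (Λ.comp lam nu h1)),
    Λ.deg mu = (fun _ => 1) ∧ Λ.deg nu = (fun _ => 1) ∧
    lam' = Λ.comp mu (Λ.comp lam nu h1) h2

namespace OccursAt

theorem of_isUnitExtension {lam lam' σ : Λ.Mor} {a : Fin k → ℕ}
    (he : Λ.IsUnitExtension lam lam') (h : Λ.OccursAt lam a σ) :
    Λ.OccursAt lam' (a + fun _ => 1) σ := by
  obtain ⟨μ, ν, h1, h2, hμ, -, rfl⟩ := he
  rw [add_comm, ← hμ]
  exact (h.comp_right ν h1).comp_left μ h2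

variable {lam : ℕ → Λ.Mor} {σ : Λ.Mor} {j : ℕ}

theorem of_chain (hext : ∀ j, Λ.IsUnitExtension (lam j) (lam (j + 1))) {a : Fin k → ℕ}
    (h : Λ.OccursAt (lam j) a σ) (t : ℕ) :
    Λ.OccursAt (lam (j + t)) (a + fun _ => t) σ := by
  induction t with
  | zero => simpa [← Pi.zero_def] using h
  | succ t ih =>
    have e : (a + fun _ => t + 1) = (a + fun _ => t) + fun _ => 1 := by
      funext i; simp [add_assoc]
    rw [e]
    exact ih.of_isUnitExtension (hext (j + t))

theorem lift_window (hext : ∀ j, Λ.IsUnitExtension (lam j) (lam (j + 1)))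
    {m : Fin k → ℤ} {J : ℕ} (hm : -(jvecZ k j) ≤ m) (hjJ : j ≤ J)
    (h : Λ.OccursAt (lam j) (toNatSub m (-(jvecZ k j))) σ) :
    Λ.OccursAt (lam J) (toNatSub m (-(jvecZ k J))) σ := by
  obtain ⟨t, rfl⟩ := Nat.exists_eq_add_of_le hjJ
  rw [toNatSub_neg_jvecZ_add hm]
  exact h.of_chain hext t

end OccursAt

end KGraph

section ConsistentFamily

variable {k : ℕ} {Λ : KGraph k} {lam : ℕ → Λ.Mor} {l m n : Fin k → ℤ}

theorem deg_eq_toNatSub_jvecZ (hdeg : ∀ j : ℕ, Λ.deg (lam j) = fun _ => 2 * j) (j : ℕ) :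
    Λ.deg (lam j) = toNatSub (jvecZ k j) (-(jvecZ k j)) := by
  funext i; simp only [hdeg, toNatSub, jvecZ, Pi.neg_apply]; omega

theorem exists_occursAt_window (hdeg : ∀ j : ℕ, Λ.deg (lam j) = fun _ => 2 * j) {j : ℕ}
    (hmn : m ≤ n) (hm : -(jvecZ k j) ≤ m) (hn : n ≤ jvecZ k j) :
    ∃ σ, Λ.deg σ = toNatSub n m ∧ Λ.OccursAt (lam j) (toNatSub m (-(jvecZ k j))) σ :=
  Λ.exists_occursAt (lam j) <| by
    rw [toNatSub_add_toNatSub hm hmn, deg_eq_toNatSub_jvecZ hdeg]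
    exact toNatSub_le_toNatSub hn

theorem exists_segment (hdeg : ∀ j : ℕ, Λ.deg (lam j) = fun _ => 2 * j)
    (hext : ∀ j, Λ.IsUnitExtension (lam j) (lam (j + 1))) (hmn : m ≤ n) :
    ∃ σ, Λ.deg σ = toNatSub n m ∧ ∀ j, -(jvecZ k j) ≤ m → n ≤ jvecZ k j →
      Λ.OccursAt (lam j) (toNatSub m (-(jvecZ k j))) σ := by
  obtain ⟨j₀, hm₀, hn₀⟩ := exists_jvecZ_window m n
  obtain ⟨σ, hdσ, hσ⟩ := exists_occursAt_window hdeg hmn hm₀ hn₀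
  refine ⟨σ, hdσ, fun j hm hn => ?_⟩
  obtain ⟨τ, hdτ, hτ⟩ := exists_occursAt_window hdeg hmn hm hn
  have hτσ : τ = σ := (hτ.lift_window hext hm (le_max_left j j₀)).unique
    (hσ.lift_window hext hm₀ (le_max_right j j₀)) (hdτ.trans hdσ.symm)
  exact hτσ ▸ hτ

noncomputable def familySeg (hdeg : ∀ j : ℕ, Λ.deg (lam j) = fun _ => 2 * j)
    (hext : ∀ j, Λ.IsUnitExtension (lam j) (lam (j + 1))) (m n : Fin k → ℤ) (hmn : m ≤ n) :
    Λ.Mor :=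
  (exists_segment hdeg hext hmn).choose

variable (hdeg : ∀ j : ℕ, Λ.deg (lam j) = fun _ => 2 * j)
  (hext : ∀ j, Λ.IsUnitExtension (lam j) (lam (j + 1)))

theorem deg_familySeg (hmn : m ≤ n) : Λ.deg (familySeg hdeg hext m n hmn) = toNatSub n m :=
  (exists_segment hdeg hext hmn).choose_spec.1

theorem occursAt_familySeg (hmn : m ≤ n) {j : ℕ} (hm : -(jvecZ k j) ≤ m)
    (hn : n ≤ jvecZ k j) :
    Λ.OccursAt (lam j) (toNatSub m (-(jvecZ k j))) (familySeg hdeg hext m n hmn) :=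
  (exists_segment hdeg hext hmn).choose_spec.2 j hm hn

theorem familySeg_eq_of_occursAt (hmn : m ≤ n) {j : ℕ} (hm : -(jvecZ k j) ≤ m)
    (hn : n ≤ jvecZ k j) {σ : Λ.Mor} (hσ : Λ.OccursAt (lam j) (toNatSub m (-(jvecZ k j))) σ)
    (hd : Λ.deg σ = toNatSub n m) : familySeg hdeg hext m n hmn = σ :=
  (occursAt_familySeg hdeg hext hmn hm hn).unique hσ ((deg_familySeg hdeg hext hmn).trans hd.symm)

theorem src_familySeg (hmn : m ≤ n) :
    Λ.src (familySeg hdeg hext m n hmn) = familySeg hdeg hext n n le_rfl := by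
  obtain ⟨j, hm, hn⟩ := exists_jvecZ_window m n
  have hsrc := (occursAt_familySeg hdeg hext hmn hm hn).src
  rw [deg_familySeg, toNatSub_add_toNatSub hm hmn] at hsrc
  exact (familySeg_eq_of_occursAt hdeg hext le_rfl (hm.trans hmn) hn hsrc
    (by rw [Λ.deg_src, toNatSub_self])).symm

theorem rng_familySeg (hmn : m ≤ n) :
    Λ.rng (familySeg hdeg hext m n hmn) = familySeg hdeg hext m m le_rfl := by
  obtain ⟨j, hm, hn⟩ := exists_jvecZ_window m n
  exact (familySeg_eq_of_occursAt hdeg hext le_rfl hm (hmn.trans hn)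
    (occursAt_familySeg hdeg hext hmn hm hn).rng (by rw [Λ.deg_rng, toNatSub_self])).symm

theorem familySeg_comp (hlm : l ≤ m) (hmn : m ≤ n)
    (h : Λ.src (familySeg hdeg hext l m hlm) = Λ.rng (familySeg hdeg hext m n hmn)) :
    Λ.comp (familySeg hdeg hext l m hlm) (familySeg hdeg hext m n hmn) h =
      familySeg hdeg hext l n (hlm.trans hmn) := by
  obtain ⟨j, hl, hn⟩ := exists_jvecZ_window l n
  have hσ := occursAt_familySeg hdeg hext hlm hl (hmn.trans hn)
  have hτ := occursAt_familySeg hdeg hext hmn (hl.trans hlm) hn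
  rw [← toNatSub_add_toNatSub hl hlm, ← deg_familySeg hdeg hext hlm] at hτ
  obtain ⟨_, hστ⟩ := hσ.comp hτ
  refine (familySeg_eq_of_occursAt hdeg hext (hlm.trans hmn) hl hn hστ ?_).symm
  rw [Λ.deg_comp, deg_familySeg, deg_familySeg, toNatSub_add_toNatSub hlm hmn]

noncomputable def TwoSidedPath.ofConsistentFamily : TwoSidedPath Λ where
  toFun := familySeg hdeg hext
  deg_eq m n hmn i := by
    have := congrFun (deg_familySeg hdeg hext hmn) i
    have : m i ≤ n i := hmn i
    simp only [toNatSub] at *; omega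
  src_eq _ _ := src_familySeg hdeg hext
  rng_eq _ _ := rng_familySeg hdeg hext
  comp_eq _ _ _ hlm hmn := familySeg_comp hdeg hext hlm hmn _

theorem TwoSidedPath.ofConsistentFamily_toFun_jvecZ (j : ℕ) :
    (ofConsistentFamily hdeg hext).toFun (-(jvecZ k j)) (jvecZ k j) (neg_jvecZ_le k j) =
      lam j :=
  familySeg_eq_of_occursAt hdeg hext (neg_jvecZ_le k j) le_rfl le_rfl
    (by rw [toNatSub_self]; exact Λ.occursAt_self (lam j)) (deg_eq_toNatSub_jvecZ hdeg j)

theorem TwoSidedPath.eq_ofConsistentFamily (y : TwoSidedPath Λ)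
    (hy : ∀ j, y.toFun (-(jvecZ k j)) (jvecZ k j) (neg_jvecZ_le k j) = lam j) :
    y = ofConsistentFamily hdeg hext := by
  refine toFun_injective (funext fun m => funext fun n => funext fun hmn => ?_)
  obtain ⟨j, hm, hn⟩ := exists_jvecZ_window m n
  have hocc := y.occursAt_toFun hm hmn hn
  rw [hy j] at hocc
  exact (familySeg_eq_of_occursAt hdeg hext hmn hm hn hocc (y.deg_toFun hmn)).symm

end ConsistentFamily

theorem twoSidedPath_of_consistent_family_general {k : ℕ} (Λ : KGraph k)
    (lam : ℕ → Λ.Mor)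
    (hdeg : ∀ j : ℕ, Λ.deg (lam j) = fun _ => 2 * j)
    (hext : ∀ j : ℕ, ∃ (mu nu : Λ.Mor) (h1 : Λ.src (lam j) = Λ.rng nu)
      (h2 : Λ.src mu = Λ.rng (Λ.comp (lam j) nu h1)),
      Λ.deg mu = (fun _ => 1) ∧ Λ.deg nu = (fun _ => 1) ∧
      lam (j + 1) = Λ.comp mu (Λ.comp (lam j) nu h1) h2) :
    ∃! x : TwoSidedPath Λ,
      ∀ j : ℕ, x.toFun (-(jvecZ k j)) (jvecZ k j) (neg_jvecZ_le k j) = lam j :=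
  ⟨.ofConsistentFamily hdeg hext, TwoSidedPath.ofConsistentFamily_toFun_jvecZ hdeg hext,
    fun y hy => y.eq_ofConsistentFamily hdeg hext hy⟩

/-- A consistent family `λ_j ∈ Λ^{2je}` (with `λ_{j+1} = μ λ_j ν`
for some `μ, ν ∈ Λ^e`) determines a unique two-sided path `x` with
`x(-je, je) = λ_j` for all `j`. -/
theorem twoSidedPath_of_consistent_family {k : ℕ} (hk : 0 < k) (Λ : KGraph k)
    (lam : ℕ → Λ.Mor)
    (hdeg : ∀ j : ℕ, Λ.deg (lam j) = fun _ => 2 * j)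
    (hext : ∀ j : ℕ, ∃ (mu nu : Λ.Mor) (h1 : Λ.src (lam j) = Λ.rng nu)
      (h2 : Λ.src mu = Λ.rng (Λ.comp (lam j) nu h1)),
      Λ.deg mu = (fun _ => 1) ∧ Λ.deg nu = (fun _ => 1) ∧
      lam (j + 1) = Λ.comp mu (Λ.comp (lam j) nu h1) h2) :
    ∃! x : TwoSidedPath Λ,
      ∀ j : ℕ, x.toFun (-(jvecZ k j)) (jvecZ k j) (neg_jvecZ_le k j) = lam j :=
  twoSidedPath_of_consistent_family_general Λ lam hdeg hext
end

section
/- Let (Λ,d) be a primitive k-graph satisfying the standing assumption (★). Then the shift action σ on Λ^Δ is topologically mixing: for any two nonempty open sets U and V in Λ^Δ there is Q ∈ ℤ^k such that U ∩ σ^q(V) ≠ ∅ for all q ∈ ℤ^k with q ≥ Q. -/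
open scoped Classical
open TopologicalSpace MeasureTheory

/-! Every open set contains a cylinder `Z(x(m, n), m)` around each of its points. Given such
cylinders for `x ∈ U` and `y ∈ V`, primitivity and (★) provide, for every large enough `q`, a
morphism `λ` with range `y(n_V)`, source `x(m_U)` and degree `m_U + q - n_V`. Splicing `y` up
to `n_V`, then `λ`, then `σ^{-q} x` gives a path `w ∈ V` with `σ^q w ∈ U`. The spliced path is
the union of its nested finite windows `y(n_V - j, n_V) λ (σ^{-q} x)(m_U + q, m_U + q + j)`:
unique factorisation lets one read off `w(l, m)` as the segment of any window containing
`[l, m]`. -/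

namespace KGraph

variable {k : ℕ} {Λ : KGraph k}

/-- Composition, extended by the junk value `a` to non-composable pairs so that factorisations can
be stated without carrying composability proofs. -/
noncomputable def cmp (Λ : KGraph k) (a b : Λ.Mor) : Λ.Mor :=
  if h : Λ.src a = Λ.rng b then Λ.comp a b h else a

@[simp]
theorem degZ_apply (a : Λ.Mor) (i : Fin k) : Λ.degZ a i = (Λ.deg a i : ℤ) := rfl

theorem cmp_of_src_eq_rng {a b : Λ.Mor} (h : Λ.src a = Λ.rng b) :
    Λ.cmp a b = Λ.comp a b h :=
  dif_pos h

theorem src_cmp {a b : Λ.Mor} (h : Λ.src a = Λ.rng b) : Λ.src (Λ.cmp a b) = Λ.src b := by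
  rw [cmp_of_src_eq_rng h, Λ.src_comp]

theorem rng_cmp {a b : Λ.Mor} (h : Λ.src a = Λ.rng b) : Λ.rng (Λ.cmp a b) = Λ.rng a := by
  rw [cmp_of_src_eq_rng h, Λ.rng_comp]

theorem deg_cmp {a b : Λ.Mor} (h : Λ.src a = Λ.rng b) :
    Λ.deg (Λ.cmp a b) = Λ.deg a + Λ.deg b := by
  rw [cmp_of_src_eq_rng h, Λ.deg_comp]

theorem degZ_cmp {a b : Λ.Mor} (h : Λ.src a = Λ.rng b) :
    Λ.degZ (Λ.cmp a b) = Λ.degZ a + Λ.degZ b := by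
  funext i
  simp [deg_cmp h]

theorem degZ_nonneg (a : Λ.Mor) : 0 ≤ Λ.degZ a := fun _ => Int.natCast_nonneg _

theorem degZ_inj {a b : Λ.Mor} : Λ.degZ a = Λ.degZ b ↔ Λ.deg a = Λ.deg b := by
  refine ⟨fun h => funext fun i => ?_, fun h => funext fun i => by simp [h]⟩
  simpa using congrFun h i

theorem degZ_eq_zero_iff {v : Λ.Mor} : Λ.degZ v = 0 ↔ Λ.IsVertex v := by
  simp only [IsVertex, funext_iff, degZ, Pi.zero_apply, Nat.cast_eq_zero]

theorem cmp_assoc {a b c : Λ.Mor} (h1 : Λ.src a = Λ.rng b) (h2 : Λ.src b = Λ.rng c) :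
    Λ.cmp (Λ.cmp a b) c = Λ.cmp a (Λ.cmp b c) := by
  have h3 : Λ.src (Λ.comp a b h1) = Λ.rng c := by rw [Λ.src_comp]; exact h2
  have h4 : Λ.src a = Λ.rng (Λ.comp b c h2) := by rw [Λ.rng_comp]; exact h1
  rw [cmp_of_src_eq_rng h1, cmp_of_src_eq_rng h2, cmp_of_src_eq_rng h3, cmp_of_src_eq_rng h4,
    Λ.assoc]

theorem rng_cmp_self (a : Λ.Mor) : Λ.cmp (Λ.rng a) a = a := by
  have h : Λ.src (Λ.rng a) = Λ.rng a := Λ.src_obj _ (Λ.deg_rng a)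
  rw [cmp_of_src_eq_rng h, Λ.id_comp]

theorem cmp_src_self (a : Λ.Mor) : Λ.cmp a (Λ.src a) = a := by
  have h : Λ.src a = Λ.rng (Λ.src a) := (Λ.rng_obj _ (Λ.deg_src a)).symm
  rw [cmp_of_src_eq_rng h, Λ.comp_id]

theorem cmp_cancel {a b a' b' : Λ.Mor} (h : Λ.src a = Λ.rng b) (h' : Λ.src a' = Λ.rng b')
    (he : Λ.cmp a b = Λ.cmp a' b') (hd : Λ.degZ a = Λ.degZ a') : a = a' ∧ b = b' := by
  have hdb : Λ.deg b = Λ.deg b' := by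
    have := (deg_cmp h).symm.trans (he ▸ deg_cmp h')
    rw [degZ_inj.1 hd] at this
    exact add_left_cancel this
  obtain ⟨_, -, huniq⟩ := Λ.factor (Λ.cmp a b) (Λ.deg a) (Λ.deg b) (deg_cmp h)
  have e := (huniq (a, b) ⟨rfl, rfl, h, (cmp_of_src_eq_rng h).symm⟩).trans
    (huniq (a', b') ⟨(degZ_inj.1 hd).symm, hdb.symm, h', by rw [he, cmp_of_src_eq_rng h']⟩).symm
  exact Prod.ext_iff.1 e

theorem exists_cmp_eq (F : Λ.Mor) {n₁ n₂ : Fin k → ℤ} (h₁ : 0 ≤ n₁) (h₂ : 0 ≤ n₂)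
    (hF : Λ.degZ F = n₁ + n₂) :
    ∃ a b, Λ.src a = Λ.rng b ∧ Λ.cmp a b = F ∧ Λ.degZ a = n₁ ∧ Λ.degZ b = n₂ := by
  lift n₁ to Fin k → ℕ using h₁
  lift n₂ to Fin k → ℕ using h₂
  have hF' : Λ.deg F = n₁ + n₂ := by
    funext i
    have := congrFun hF i
    simp only [degZ_apply, Pi.add_apply] at this
    exact_mod_cast this
  obtain ⟨⟨a, b⟩, ⟨ha, hb, h, he⟩, -⟩ := Λ.factor F n₁ n₂ hF'
  exact ⟨a, b, h, (cmp_of_src_eq_rng h).trans he, funext fun i => by simp [ha],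
    funext fun i => by simp [hb]⟩

def IsSegment (Λ : KGraph k) (F M : Λ.Mor) (a : Fin k → ℤ) : Prop :=
  ∃ A B, Λ.src A = Λ.rng M ∧ Λ.src M = Λ.rng B ∧ Λ.cmp A (Λ.cmp M B) = F ∧ Λ.degZ A = a

theorem isSegment_cmp_left {P Q : Λ.Mor} (h : Λ.src P = Λ.rng Q) :
    Λ.IsSegment (Λ.cmp P Q) P 0 := by
  refine ⟨Λ.rng P, Q, Λ.src_obj _ (Λ.deg_rng P), h, ?_, degZ_eq_zero_iff.2 (Λ.deg_rng P)⟩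
  rw [← rng_cmp h, rng_cmp_self]

theorem isSegment_cmp_right {P Q : Λ.Mor} (h : Λ.src P = Λ.rng Q) :
    Λ.IsSegment (Λ.cmp P Q) Q (Λ.degZ P) :=
  ⟨P, Λ.src Q, h, (Λ.rng_obj _ (Λ.deg_src Q)).symm, by rw [cmp_src_self], rfl⟩

theorem isSegment_cmp_cmp_mid {P Q R : Λ.Mor} (h₁ : Λ.src P = Λ.rng Q)
    (h₂ : Λ.src Q = Λ.rng R) : Λ.IsSegment (Λ.cmp P (Λ.cmp Q R)) Q (Λ.degZ P) :=
  ⟨P, R, h₁, h₂, rfl, rfl⟩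

namespace IsSegment

variable {F G M M' : Λ.Mor} {a b : Fin k → ℤ}

theorem nonneg (h : Λ.IsSegment F M a) : 0 ≤ a := by
  obtain ⟨A, -, -, -, -, rfl⟩ := h
  exact degZ_nonneg A

theorem add_degZ_le (h : Λ.IsSegment F M a) : a + Λ.degZ M ≤ Λ.degZ F := by
  obtain ⟨A, B, hA, hB, rfl, rfl⟩ := h
  rw [degZ_cmp (hA.trans (rng_cmp hB).symm), degZ_cmp hB, ← add_assoc]
  exact le_add_of_nonneg_right (degZ_nonneg B)

theorem unique (h : Λ.IsSegment F M a) (h' : Λ.IsSegment F M' a)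
    (hd : Λ.degZ M = Λ.degZ M') : M = M' := by
  obtain ⟨A, B, hA, hB, hF, hdA⟩ := h
  obtain ⟨A', B', hA', hB', hF', hdA'⟩ := h'
  have hMB := (cmp_cancel (hA.trans (rng_cmp hB).symm) (hA'.trans (rng_cmp hB').symm)
    (hF.trans hF'.symm) (hdA.trans hdA'.symm)).2
  exact (cmp_cancel hB hB' hMB hd).1

theorem exists_of_le (ha : 0 ≤ a) (hb : 0 ≤ b) (hF : a + b ≤ Λ.degZ F) :
    ∃ M, Λ.IsSegment F M a ∧ Λ.degZ M = b := by
  obtain ⟨A, R, hAR, rfl, hdA, hdR⟩ :=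
    exists_cmp_eq F ha (sub_nonneg.2 ((le_add_of_nonneg_right hb).trans hF))
      (add_sub_cancel a _).symm
  obtain ⟨M, B, hMB, rfl, hdM, -⟩ := exists_cmp_eq R hb (sub_nonneg.2 (le_sub_iff_add_le'.2 hF))
    (by rw [hdR]; abel)
  exact ⟨M, ⟨A, B, hAR.trans (rng_cmp hMB), hMB, rfl, hdA⟩, hdM⟩

theorem trans (h : Λ.IsSegment G M a) (h' : Λ.IsSegment F G b) : Λ.IsSegment F M (b + a) := by
  obtain ⟨A, B, hA, hB, rfl, rfl⟩ := h
  obtain ⟨A₂, B₂, hA₂, hB₂, rfl, rfl⟩ := h'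
  have hAMB : Λ.src A = Λ.rng (Λ.cmp M B) := hA.trans (rng_cmp hB).symm
  have hA₂A : Λ.src A₂ = Λ.rng A := hA₂.trans (rng_cmp hAMB)
  have hBB₂ : Λ.src B = Λ.rng B₂ := by rw [← src_cmp hB, ← src_cmp hAMB]; exact hB₂
  refine ⟨Λ.cmp A₂ A, Λ.cmp B B₂, (src_cmp hA₂A).trans hA, hB.trans (rng_cmp hBB₂).symm, ?_,
    degZ_cmp hA₂A⟩
  have hMBB₂ : Λ.src (Λ.cmp M B) = Λ.rng B₂ := (src_cmp hB).trans hBB₂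
  rw [cmp_assoc hAMB hMBB₂, cmp_assoc hB hBB₂, cmp_assoc hA₂A (hA.trans (rng_cmp _).symm)]
  exact hB.trans (rng_cmp hBB₂).symm

theorem src (h : Λ.IsSegment F M a) : Λ.IsSegment F (Λ.src M) (a + Λ.degZ M) := by
  have hM := isSegment_cmp_right (P := M) (Λ.rng_obj _ (Λ.deg_src M)).symm
  rw [cmp_src_self] at hM
  exact hM.trans h

theorem rng (h : Λ.IsSegment F M a) : Λ.IsSegment F (Λ.rng M) a := by
  have hM := isSegment_cmp_left (Q := M) (Λ.src_obj _ (Λ.deg_rng M))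
  rw [rng_cmp_self] at hM
  simpa using hM.trans h

theorem cmp (h₁ : Λ.IsSegment F M a) (h₂ : Λ.IsSegment F M' (a + Λ.degZ M)) :
    Λ.IsSegment F (Λ.cmp M M') a := by
  obtain ⟨N, hN, hdN⟩ := exists_of_le h₁.nonneg (add_nonneg (degZ_nonneg M) (degZ_nonneg M'))
    (by rw [← add_assoc]; exact h₂.add_degZ_le)
  obtain ⟨N₁, N₂, hN₁₂, rfl, hd₁, hd₂⟩ :=
    exists_cmp_eq N (degZ_nonneg M) (degZ_nonneg M') hdN
  have e₁ : N₁ = M := by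
    refine IsSegment.unique ?_ h₁ hd₁
    simpa using (isSegment_cmp_left hN₁₂).trans hN
  have e₂ : N₂ = M' := by
    refine IsSegment.unique ?_ h₂ hd₂
    simpa [hd₁] using (isSegment_cmp_right hN₁₂).trans hN
  rwa [← e₁, ← e₂]

end IsSegment

end KGraph

theorem jvecZ_nonneg (k j : ℕ) : 0 ≤ jvecZ k j := fun _ => Int.natCast_nonneg j

theorem exists_le_jvecZ {k : ℕ} (v : Fin k → ℤ) : ∃ j : ℕ, v ≤ jvecZ k j := by
  refine ⟨Finset.univ.sup fun i => (v i).toNat, fun i => ?_⟩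
  have := Finset.le_sup (f := fun i => (v i).toNat) (Finset.mem_univ i)
  simp only [jvecZ]
  omega

namespace TwoSidedPath

open KGraph

variable {k : ℕ} {Λ : KGraph k}

theorem degZ_toFun (x : TwoSidedPath Λ) {m n : Fin k → ℤ} (h : m ≤ n) :
    Λ.degZ (x.toFun m n h) = n - m :=
  funext (x.deg_eq m n h)

theorem isVertex_toFun (x : TwoSidedPath Λ) (m : Fin k → ℤ) : Λ.IsVertex (x.toFun m m le_rfl) :=
  degZ_eq_zero_iff.1 ((x.degZ_toFun le_rfl).trans (sub_self m))

theorem cmp_toFun (x : TwoSidedPath Λ) {l m n : Fin k → ℤ} (h₁ : l ≤ m) (h₂ : m ≤ n) :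
    Λ.cmp (x.toFun l m h₁) (x.toFun m n h₂) = x.toFun l n (h₁.trans h₂) := by
  rw [cmp_of_src_eq_rng ((x.src_eq l m h₁).trans (x.rng_eq m n h₂).symm), x.comp_eq]

theorem isSegment_toFun (x : TwoSidedPath Λ) {a m n b : Fin k → ℤ} (ha : a ≤ m) (hmn : m ≤ n)
    (hb : n ≤ b) :
    Λ.IsSegment (x.toFun a b (ha.trans (hmn.trans hb))) (x.toFun m n hmn) (m - a) :=
  ⟨x.toFun a m ha, x.toFun n b hb, (x.src_eq _ _ _).trans (x.rng_eq _ _ _).symm,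
    (x.src_eq _ _ _).trans (x.rng_eq _ _ _).symm, by rw [cmp_toFun, cmp_toFun],
    x.degZ_toFun ha⟩

theorem mem_ZCyl_toFun_iff (x z : TwoSidedPath Λ) {m n : Fin k → ℤ} (h : m ≤ n) :
    z ∈ ZCyl Λ (x.toFun m n h) m ↔ z.toFun m n h = x.toFun m n h := by
  have hn : m + Λ.degZ (x.toFun m n h) = n := by rw [x.degZ_toFun, add_sub_cancel]
  change z.toFun m _ (le_add_degZ Λ m _) = _ ↔ _
  rw [z.toFun_congr rfl hn _ h]

theorem ZCyl_toFun_subset (x : TwoSidedPath Λ) {a m n b : Fin k → ℤ} (ha : a ≤ m) (hmn : m ≤ n)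
    (hb : n ≤ b) :
    ZCyl Λ (x.toFun a b (ha.trans (hmn.trans hb))) a ⊆ ZCyl Λ (x.toFun m n hmn) m := by
  intro z hz
  rw [mem_ZCyl_toFun_iff] at hz ⊢
  refine IsSegment.unique ?_ (x.isSegment_toFun ha hmn hb)
    ((z.degZ_toFun _).trans (x.degZ_toFun _).symm)
  rw [← hz]
  exact z.isSegment_toFun ha hmn hb

theorem exists_ZCyl_toFun_subset {U : Set (TwoSidedPath Λ)} (hU : IsOpen U)
    {x : TwoSidedPath Λ} (hx : x ∈ U) :
    ∃ m n, ∃ h : m ≤ n, ZCyl Λ (x.toFun m n h) m ⊆ U := by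
  induction hU with
  | basic S hS =>
    obtain ⟨lam, m, rfl⟩ := hS
    exact ⟨m, m + Λ.degZ lam, le_add_degZ Λ m lam, by rw [show x.toFun _ _ _ = lam from hx]⟩
  | univ => exact ⟨0, 0, le_rfl, Set.subset_univ _⟩
  | inter S T _ _ ihS ihT =>
    obtain ⟨m₁, n₁, h₁, hS⟩ := ihS hx.1
    obtain ⟨m₂, n₂, h₂, hT⟩ := ihT hx.2
    refine ⟨m₁ ⊓ m₂, n₁ ⊔ n₂, inf_le_left.trans (h₁.trans le_sup_left), fun z hz => ⟨?_, ?_⟩⟩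
    · exact hS (x.ZCyl_toFun_subset inf_le_left h₁ le_sup_left hz)
    · exact hT (x.ZCyl_toFun_subset inf_le_right h₂ le_sup_right hz)
  | sUnion S _ ih =>
    obtain ⟨t, ht, hxt⟩ := hx
    obtain ⟨m, n, h, hsub⟩ := ih t ht hxt
    exact ⟨m, n, h, hsub.trans (Set.subset_sUnion_of_mem ht)⟩

/-- `f j` is placed at `L j`, i.e. it becomes the segment `w(L j, L j + d(f j))` of the path. -/
theorem exists_of_nested (L : ℕ → Fin k → ℤ) (f : ℕ → Λ.Mor)
    (hnest : ∀ j j', j ≤ j' → Λ.IsSegment (f j') (f j) (L j - L j'))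
    (hexh : ∀ l m : Fin k → ℤ, ∃ j, L j ≤ l ∧ m ≤ L j + Λ.degZ (f j)) :
    ∃ w : TwoSidedPath Λ, ∀ j l m (h : l ≤ m), L j ≤ l → m ≤ L j + Λ.degZ (f j) →
      Λ.IsSegment (f j) (w.toFun l m h) (l - L j) := by
  have mono {j j' l} {M : Λ.Mor} (hj : j ≤ j') (hM : Λ.IsSegment (f j) M (l - L j)) :
      Λ.IsSegment (f j') M (l - L j') := by
    convert hM.trans (hnest j j' hj) using 1
    abel
  have uniq {j j' l} {M M' : Λ.Mor} (hM : Λ.IsSegment (f j) M (l - L j))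
      (hM' : Λ.IsSegment (f j') M' (l - L j')) (hd : Λ.degZ M = Λ.degZ M') : M = M' :=
    (mono (le_max_left j j') hM).unique (mono (le_max_right j j') hM') hd
  have exists_seg {j l m} (h : l ≤ m) (hl : L j ≤ l) (hm : m ≤ L j + Λ.degZ (f j)) :
      ∃ M, Λ.IsSegment (f j) M (l - L j) ∧ Λ.degZ M = m - l :=
    IsSegment.exists_of_le (sub_nonneg.2 hl) (sub_nonneg.2 h)
      (by rw [sub_add_sub_cancel']; exact sub_le_iff_le_add'.2 hm)
  choose w j hw hdw using fun l m (h : l ≤ m) =>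
    let ⟨j, hl, hm⟩ := hexh l m
    let ⟨M, hM, hdM⟩ := exists_seg h hl hm
    (⟨M, j, hM, hdM⟩ : ∃ M j, Λ.IsSegment (f j) M (l - L j) ∧ Λ.degZ M = m - l)
  have hsrc (m n) (h : m ≤ n) : Λ.src (w m n h) = w n n le_rfl := by
    refine uniq (by simpa [hdw] using (hw m n h).src) (hw n n le_rfl) ?_
    rw [degZ_eq_zero_iff.2 (Λ.deg_src _), hdw, sub_self]
  have hrng (m n) (h : m ≤ n) : Λ.rng (w m n h) = w m m le_rfl := by
    refine uniq (hw m n h).rng (hw m m le_rfl) ?_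
    rw [degZ_eq_zero_iff.2 (Λ.deg_rng _), hdw, sub_self]
  have hcmp (l m n) (h₁ : l ≤ m) (h₂ : m ≤ n) :
      Λ.cmp (w l m h₁) (w m n h₂) = w l n (h₁.trans h₂) := by
    have hseg₁ := mono (Nat.le_add_right _ (j m n h₂)) (hw l m h₁)
    have hseg₂ := mono (Nat.le_add_left (j m n h₂) (j l m h₁)) (hw m n h₂)
    refine uniq (hseg₁.cmp (by rwa [hdw, sub_add_sub_cancel'])) (hw l n _) ?_
    rw [degZ_cmp ((hsrc l m h₁).trans (hrng m n h₂).symm), hdw, hdw, hdw, sub_add_sub_cancel']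
  refine ⟨⟨w, fun m n h i => congrFun (hdw m n h) i, hsrc, hrng, fun l m n h₁ h₂ => ?_⟩,
    fun i l m h hl hm => ?_⟩
  · rw [← cmp_of_src_eq_rng]
    exact hcmp l m n h₁ h₂
  · obtain ⟨M, hM, hdM⟩ := exists_seg h hl hm
    change Λ.IsSegment (f i) (w l m h) (l - L i)
    rwa [uniq (hw l m h) hM ((hdw l m h).trans hdM.symm)]


noncomputable def spliceWindow (y x : TwoSidedPath Λ) (B : Fin k → ℤ) (lam : Λ.Mor) (j : ℕ) :
    Λ.Mor :=
  Λ.cmp (y.toFun (B - jvecZ k j) B (sub_le_self B (jvecZ_nonneg k j)))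
    (Λ.cmp lam (x.toFun (B + Λ.degZ lam) (B + Λ.degZ lam + jvecZ k j)
      (le_add_of_nonneg_right (jvecZ_nonneg k j))))

section Splice

variable {y x : TwoSidedPath Λ} {B : Fin k → ℤ} {lam : Λ.Mor}

theorem src_lam_eq_rng_toFun (hs : Λ.src lam = x.toFun (B + Λ.degZ lam) (B + Λ.degZ lam) le_rfl)
    {n : Fin k → ℤ} (h : B + Λ.degZ lam ≤ n) : Λ.src lam = Λ.rng (x.toFun _ n h) :=
  hs.trans (x.rng_eq _ _ _).symm

theorem src_toFun_eq_rng_lam (hr : Λ.rng lam = y.toFun B B le_rfl) {n : Fin k → ℤ} (h : n ≤ B) :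
    Λ.src (y.toFun n B h) = Λ.rng lam :=
  (y.src_eq _ _ _).trans hr.symm

theorem isSegment_spliceWindow_lam (hr : Λ.rng lam = y.toFun B B le_rfl)
    (hs : Λ.src lam = x.toFun (B + Λ.degZ lam) (B + Λ.degZ lam) le_rfl) (j : ℕ) :
    Λ.IsSegment (spliceWindow y x B lam j) lam (B - (B - jvecZ k j)) := by
  have hlam := isSegment_cmp_cmp_mid (src_toFun_eq_rng_lam hr (sub_le_self B (jvecZ_nonneg k j)))
    (src_lam_eq_rng_toFun hs (le_add_of_nonneg_right (jvecZ_nonneg k j)))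
  rwa [degZ_toFun] at hlam

theorem isSegment_spliceWindow_left (hr : Λ.rng lam = y.toFun B B le_rfl)
    (hs : Λ.src lam = x.toFun (B + Λ.degZ lam) (B + Λ.degZ lam) le_rfl) (j : ℕ)
    {l m : Fin k → ℤ} (hl : B - jvecZ k j ≤ l) (hlm : l ≤ m) (hm : m ≤ B) :
    Λ.IsSegment (spliceWindow y x B lam j) (y.toFun l m hlm) (l - (B - jvecZ k j)) := by
  have hy : Λ.IsSegment (spliceWindow y x B lam j) _ 0 :=
    isSegment_cmp_left ((src_toFun_eq_rng_lam hr (sub_le_self B (jvecZ_nonneg k j))).trans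
      (rng_cmp (src_lam_eq_rng_toFun hs (le_add_of_nonneg_right (jvecZ_nonneg k j)))).symm)
  simpa using (y.isSegment_toFun hl hlm hm).trans hy

theorem isSegment_spliceWindow_right (hr : Λ.rng lam = y.toFun B B le_rfl)
    (hs : Λ.src lam = x.toFun (B + Λ.degZ lam) (B + Λ.degZ lam) le_rfl) (j : ℕ)
    {l m : Fin k → ℤ} (hl : B + Λ.degZ lam ≤ l) (hlm : l ≤ m)
    (hm : m ≤ B + Λ.degZ lam + jvecZ k j) :
    Λ.IsSegment (spliceWindow y x B lam j) (x.toFun l m hlm) (l - (B - jvecZ k j)) := by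
  have hlx := src_lam_eq_rng_toFun hs (le_add_of_nonneg_right (jvecZ_nonneg k j))
  have hx : Λ.IsSegment (spliceWindow y x B lam j) _ _ :=
    isSegment_cmp_right ((src_toFun_eq_rng_lam hr (sub_le_self B (jvecZ_nonneg k j))).trans
      (rng_cmp hlx).symm)
  convert ((x.isSegment_toFun hl hlm hm).trans (isSegment_cmp_right hlx)).trans hx using 1
  rw [degZ_toFun]
  abel

theorem le_add_degZ_spliceWindow (hr : Λ.rng lam = y.toFun B B le_rfl)
    (hs : Λ.src lam = x.toFun (B + Λ.degZ lam) (B + Λ.degZ lam) le_rfl) (j : ℕ) :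
    B + Λ.degZ lam + jvecZ k j ≤ B - jvecZ k j + Λ.degZ (spliceWindow y x B lam j) := by
  have h := (isSegment_spliceWindow_right hr hs j (le_add_of_nonneg_right (jvecZ_nonneg k j))
    le_rfl le_rfl).add_degZ_le
  rwa [degZ_toFun, sub_self, add_zero, sub_le_iff_le_add'] at h

theorem isSegment_spliceWindow_spliceWindow (hr : Λ.rng lam = y.toFun B B le_rfl)
    (hs : Λ.src lam = x.toFun (B + Λ.degZ lam) (B + Λ.degZ lam) le_rfl) {j j' : ℕ}
    (hj : j ≤ j') :
    Λ.IsSegment (spliceWindow y x B lam j') (spliceWindow y x B lam j)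
      (B - jvecZ k j - (B - jvecZ k j')) := by
  have hjj' : jvecZ k j ≤ jvecZ k j' := fun _ => Nat.cast_le.2 hj
  have hY := isSegment_spliceWindow_left hr hs j' (sub_le_sub_left hjj' B)
    (sub_le_self B (jvecZ_nonneg k j)) le_rfl
  have hX := isSegment_spliceWindow_right hr hs j' le_rfl
    (le_add_of_nonneg_right (jvecZ_nonneg k j)) (add_le_add_right hjj' _)
  have hlamX := (isSegment_spliceWindow_lam hr hs j').cmp (by convert hX using 1; abel)
  exact hY.cmp (by rw [degZ_toFun, sub_add_sub_cancel']; exact hlamX)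

end Splice

theorem exists_splice (y x : TwoSidedPath Λ) (B : Fin k → ℤ) (lam : Λ.Mor)
    (hr : Λ.rng lam = y.toFun B B le_rfl)
    (hs : Λ.src lam = x.toFun (B + Λ.degZ lam) (B + Λ.degZ lam) le_rfl) :
    ∃ w : TwoSidedPath Λ,
      (∀ l m (h : l ≤ m), m ≤ B → w.toFun l m h = y.toFun l m h) ∧
      (∀ l m (h : l ≤ m), B + Λ.degZ lam ≤ l → w.toFun l m h = x.toFun l m h) := by
  obtain ⟨w, hw⟩ := exists_of_nested (fun j => B - jvecZ k j) (spliceWindow y x B lam)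
    (fun _ _ => isSegment_spliceWindow_spliceWindow hr hs) fun l m => by
      obtain ⟨j, hj⟩ := exists_le_jvecZ ((B - l) ⊔ (m - (B + Λ.degZ lam)))
      rw [sup_le_iff] at hj
      exact ⟨j, sub_le_comm.1 hj.1,
        (sub_le_iff_le_add'.1 hj.2).trans (le_add_degZ_spliceWindow hr hs j)⟩
  refine ⟨w, fun l m h hm => ?_, fun l m h hl => ?_⟩
  · obtain ⟨j, hj⟩ := exists_le_jvecZ (B - l)
    have hl : B - jvecZ k j ≤ l := sub_le_comm.1 hj
    have hm' : m ≤ B + Λ.degZ lam + jvecZ k j :=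
      hm.trans ((le_add_of_nonneg_right (degZ_nonneg lam)).trans
        (le_add_of_nonneg_right (jvecZ_nonneg k j)))
    exact (hw j l m h hl (hm'.trans (le_add_degZ_spliceWindow hr hs j))).unique
      (isSegment_spliceWindow_left hr hs j hl h hm) (by rw [degZ_toFun, degZ_toFun])
  · obtain ⟨j, hj⟩ := exists_le_jvecZ (m - (B + Λ.degZ lam))
    have hm : m ≤ B + Λ.degZ lam + jvecZ k j := sub_le_iff_le_add'.1 hj
    have hl' : B - jvecZ k j ≤ l := (sub_le_self B (jvecZ_nonneg k j)).trans
      ((le_add_of_nonneg_right (degZ_nonneg lam)).trans hl)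
    exact (hw j l m h hl' (hm.trans (le_add_degZ_spliceWindow hr hs j))).unique
      (isSegment_spliceWindow_right hr hs j hl h hm) (by rw [degZ_toFun, degZ_toFun])

end TwoSidedPath

theorem KGraph.Star.exists_mor_of_le {k : ℕ} {Λ : KGraph k} (hstar : Λ.Star) {p : Fin k → ℕ}
    (hp : ∀ u v, Λ.IsVertex u → Λ.IsVertex v →
      ∃ lam, Λ.deg lam = p ∧ Λ.rng lam = u ∧ Λ.src lam = v)
    {n : Fin k → ℤ} (hpn : coeZ p ≤ n) {u v : Λ.Mor} (hu : Λ.IsVertex u) (hv : Λ.IsVertex v) :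
    ∃ lam, Λ.degZ lam = n ∧ Λ.rng lam = u ∧ Λ.src lam = v := by
  lift n - coeZ p to Fin k → ℕ using sub_nonneg.2 hpn with m hm
  obtain ⟨μ, hμ, hsμ⟩ := ((hstar m).1 v hv).2
  obtain ⟨ν, hν, hrν, hsν⟩ := hp u (Λ.rng μ) hu (Λ.deg_rng μ)
  refine ⟨Λ.cmp ν μ, funext fun i => ?_, (KGraph.rng_cmp hsν).trans hrν,
    (KGraph.src_cmp hsν).trans hsμ⟩
  have := congrFun hm i
  simp only [KGraph.degZ_apply, KGraph.deg_cmp hsν, Pi.add_apply, hν, hμ, Pi.sub_apply,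
    coeZ] at this ⊢
  omega

theorem shift_topologically_mixing_general {k : ℕ} (Λ : KGraph k)
    (hstar : Λ.Star) (hprim : Λ.Primitive)
    (U V : Set (TwoSidedPath Λ)) (hU : IsOpen U) (hV : IsOpen V)
    (hUne : U.Nonempty) (hVne : V.Nonempty) :
    ∃ Q : Fin k → ℤ, ∀ q : Fin k → ℤ, Q ≤ q →
      (U ∩ (TwoSidedPath.shift q) '' V).Nonempty := by
  obtain ⟨x, hxU⟩ := hUne
  obtain ⟨y, hyV⟩ := hVne
  obtain ⟨a, b, hab, hxU⟩ := TwoSidedPath.exists_ZCyl_toFun_subset hU hxU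
  obtain ⟨c, d, hcd, hyV⟩ := TwoSidedPath.exists_ZCyl_toFun_subset hV hyV
  obtain ⟨p, -, hp⟩ := hprim
  refine ⟨d + coeZ p - a, fun q hq => ?_⟩
  set x' := TwoSidedPath.shift (-q) x
  have hpn : coeZ p ≤ a + q - d := fun i => by
    have := hq i
    simp only [coeZ, Pi.add_apply, Pi.sub_apply] at this ⊢
    omega
  obtain ⟨lam, hlam, hr, hs⟩ :=
    hstar.exists_mor_of_le hp hpn (y.isVertex_toFun d) (x'.isVertex_toFun (a + q))
  have hd : d + Λ.degZ lam = a + q := by rw [hlam, add_sub_cancel]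
  obtain ⟨w, hwy, hwx⟩ := y.exists_splice x' d lam hr (by rwa [hd])
  refine ⟨TwoSidedPath.shift q w, hxU ?_, w, hyV ?_, rfl⟩
  · rw [TwoSidedPath.mem_ZCyl_toFun_iff]
    exact (hwx (a + q) (b + q) (add_le_add_left hab q) hd.le).trans
      (x.toFun_congr (add_neg_cancel_right a q) (add_neg_cancel_right b q) _ _)
  · exact (TwoSidedPath.mem_ZCyl_toFun_iff y w hcd).2 (hwy c d hcd le_rfl)

/-- If `Λ` is primitive then the shift action on `Λ^Δ` is
topologically mixing. -/
theorem shift_topologically_mixing {k : ℕ} (hk : 0 < k) (Λ : KGraph k)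
    (hstar : Λ.Star) (hprim : Λ.Primitive)
    (U V : Set (TwoSidedPath Λ)) (hU : IsOpen U) (hV : IsOpen V)
    (hUne : U.Nonempty) (hVne : V.Nonempty) :
    ∃ Q : Fin k → ℤ, ∀ q : Fin k → ℤ, Q ≤ q →
      (U ∩ (TwoSidedPath.shift q) '' V).Nonempty :=
  shift_topologically_mixing_general Λ hstar hprim U V hU hV hUne hVne
end

section
/- Let (Λ,d) be a k-graph satisfying the standing assumption (★). The bracket map (x,y) ↦ [x,y], defined on {(x,y) ∈ Λ^Δ × Λ^Δ : x(0) = y(0)}, is continuous (with respect to the product of the cylinder-set topologies) and satisfies: [x,x] = x for all x; [[x,y],z] = [x,z] whenever x(0) = y(0) = z(0); [x,[y,z]] = [x,z] whenever x(0) = y(0) = z(0); and for n ∈ ℕ^k, σ^n[x,y] = [σ^n x, σ^n y] whenever x(0) = y(0) and x(a,b) = y(a,b) for all 0 ≤ a ≤ b ≤ n, and σ^{−n}[x,y] = [σ^{−n} x, σ^{−n} y] whenever x(0) = y(0) and x(a,b) = y(a,b) for all −n ≤ a ≤ b ≤ 0. -/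
open scoped Classical
open TopologicalSpace MeasureTheory

/-!
A path is determined by its values on the intervals `[m, n]` with `n ≤ 0` or `0 ≤ m`: by unique
factorisation, its value on any `[a, b]` is a factor of its value on `[a ⊓ 0, b ⊔ 0]`, which is
the composite of the values on `[a ⊓ 0, 0]` and `[0, b ⊔ 0]`. Hence `[x, y]` is unique, every
identity follows by comparing the two halves of both sides, and `[x, y](a, b)` depends only on
`x(a ⊓ 0, 0)` and `y(0, b ⊔ 0)`, which are locally constant in `x` and `y`.
-/

namespace TwoSidedPath

variable {k : ℕ} {Λ : KGraph k}

theorem ext {z w : TwoSidedPath Λ}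
    (h : ∀ m n (hmn : m ≤ n), z.toFun m n hmn = w.toFun m n hmn) : z = w := by
  cases z; cases w
  congr
  funext m n hmn
  exact h m n hmn

theorem deg_toFun_eq_deg_toFun (z w : TwoSidedPath Λ) {m n : Fin k → ℤ} (h h' : m ≤ n) :
    Λ.deg (z.toFun m n h) = Λ.deg (w.toFun m n h') := by
  funext i
  have hz := z.deg_eq m n h i
  have hw := w.deg_eq m n h' i
  omega

theorem add_degZ_toFun (x : TwoSidedPath Λ) {a b : Fin k → ℤ} (h : a ≤ b) :
    a + Λ.degZ (x.toFun a b h) = b := by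
  funext i
  have hx := x.deg_eq a b h i
  simp only [Pi.add_apply, KGraph.degZ]
  omega

theorem ZCyl_toFun (x : TwoSidedPath Λ) {a b : Fin k → ℤ} (h : a ≤ b) :
    ZCyl Λ (x.toFun a b h) a = {x' | x'.toFun a b h = x.toFun a b h} := by
  ext x'
  exact Eq.congr_left (x'.toFun_congr rfl (x.add_degZ_toFun h) _ h)

theorem isOpen_setOf_toFun_eq (x : TwoSidedPath Λ) {a b : Fin k → ℤ} (h : a ≤ b) :
    IsOpen {x' : TwoSidedPath Λ | x'.toFun a b h = x.toFun a b h} :=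
  x.ZCyl_toFun h ▸ isOpen_generateFrom_of_mem ⟨_, _, rfl⟩

theorem toFun_eq_and_toFun_eq_of_toFun_eq (z w : TwoSidedPath Λ) {l m n : Fin k → ℤ}
    (h1 : l ≤ m) (h2 : m ≤ n)
    (heq : z.toFun l n (h1.trans h2) = w.toFun l n (h1.trans h2)) :
    z.toFun l m h1 = w.toFun l m h1 ∧ z.toFun m n h2 = w.toFun m n h2 := by
  have hdeg : Λ.deg (z.toFun l n (h1.trans h2)) =
      Λ.deg (z.toFun l m h1) + Λ.deg (z.toFun m n h2) := by
    rw [← z.comp_eq l m n h1 h2, Λ.deg_comp]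
  obtain ⟨p, -, hunique⟩ := Λ.factor _ _ _ hdeg
  have hz : ((z.toFun l m h1, z.toFun m n h2) : Λ.Mor × Λ.Mor) = p :=
    hunique _ ⟨rfl, rfl, _, z.comp_eq l m n h1 h2⟩
  have hw : ((w.toFun l m h1, w.toFun m n h2) : Λ.Mor × Λ.Mor) = p :=
    hunique _ ⟨w.deg_toFun_eq_deg_toFun z h1 h1, w.deg_toFun_eq_deg_toFun z h2 h2, _,
      (w.comp_eq l m n h1 h2).trans heq.symm⟩
  exact Prod.ext_iff.mp (hz.trans hw.symm)

theorem toFun_eq_of_le_of_le (z w : TwoSidedPath Λ) {l n a b : Fin k → ℤ}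
    (hln : l ≤ n) (heq : z.toFun l n hln = w.toFun l n hln)
    (hla : l ≤ a) (hab : a ≤ b) (hbn : b ≤ n) :
    z.toFun a b hab = w.toFun a b hab :=
  (z.toFun_eq_and_toFun_eq_of_toFun_eq w hab hbn
    (z.toFun_eq_and_toFun_eq_of_toFun_eq w hla (hab.trans hbn) heq).2).1

theorem toFun_trans_eq (z w : TwoSidedPath Λ) {l m n : Fin k → ℤ} (h1 : l ≤ m) (h2 : m ≤ n)
    (heq1 : z.toFun l m h1 = w.toFun l m h1) (heq2 : z.toFun m n h2 = w.toFun m n h2) :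
    z.toFun l n (h1.trans h2) = w.toFun l n (h1.trans h2) := by
  rw [← z.comp_eq l m n h1 h2, ← w.comp_eq l m n h1 h2]
  congr

theorem toFun_eq_of_agree_inf_sup (z w : TwoSidedPath Λ) {a b : Fin k → ℤ} (hab : a ≤ b)
    (hneg : z.toFun (a ⊓ 0) 0 inf_le_right = w.toFun (a ⊓ 0) 0 inf_le_right)
    (hpos : z.toFun 0 (b ⊔ 0) le_sup_right = w.toFun 0 (b ⊔ 0) le_sup_right) :
    z.toFun a b hab = w.toFun a b hab :=
  z.toFun_eq_of_le_of_le w _ (z.toFun_trans_eq w _ _ hneg hpos) inf_le_left hab le_sup_left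

theorem ext_of_agree_nonpos_of_agree_nonneg {z w : TwoSidedPath Λ}
    (hneg : ∀ m n (h : m ≤ n), n ≤ 0 → z.toFun m n h = w.toFun m n h)
    (hpos : ∀ m n (h : m ≤ n), 0 ≤ m → z.toFun m n h = w.toFun m n h) :
    z = w :=
  ext fun _ _ hmn =>
    z.toFun_eq_of_agree_inf_sup w hmn (hneg _ _ _ le_rfl) (hpos _ _ _ le_rfl)

/-- `z = [x, y]` in the paper's notation. -/
def IsBracket (x y z : TwoSidedPath Λ) : Prop :=
  (∀ m n (hmn : m ≤ n), n ≤ 0 → z.toFun m n hmn = x.toFun m n hmn) ∧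
    (∀ m n (hmn : m ≤ n), 0 ≤ m → z.toFun m n hmn = y.toFun m n hmn)

variable {x y z w x' y' z' : TwoSidedPath Λ}

theorem IsBracket.unique (hz : IsBracket x y z) (hw : IsBracket x y w) : z = w :=
  ext_of_agree_nonpos_of_agree_nonneg
    (fun m n hmn hn => (hz.1 m n hmn hn).trans (hw.1 m n hmn hn).symm)
    (fun m n hmn hm => (hz.2 m n hmn hm).trans (hw.2 m n hmn hm).symm)

theorem isBracket_self (x : TwoSidedPath Λ) : IsBracket x x x :=
  ⟨fun _ _ _ _ => rfl, fun _ _ _ _ => rfl⟩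

theorem IsBracket.bracket_left (hw : IsBracket x y w) (hz : IsBracket w z z') :
    IsBracket x z z' :=
  ⟨fun m n hmn hn => (hz.1 m n hmn hn).trans (hw.1 m n hmn hn), hz.2⟩

theorem IsBracket.bracket_right (hw : IsBracket y z w) (hz : IsBracket x w z') :
    IsBracket x z z' :=
  ⟨hz.1, fun m n hmn hm => (hz.2 m n hmn hm).trans (hw.2 m n hmn hm)⟩

theorem IsBracket.toFun_eq_of_agree (hz : IsBracket x y z) (hz' : IsBracket x' y' z')
    {a b : Fin k → ℤ} (hab : a ≤ b)
    (hx : x'.toFun (a ⊓ 0) 0 inf_le_right = x.toFun (a ⊓ 0) 0 inf_le_right)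
    (hy : y'.toFun 0 (b ⊔ 0) le_sup_right = y.toFun 0 (b ⊔ 0) le_sup_right) :
    z'.toFun a b hab = z.toFun a b hab :=
  z'.toFun_eq_of_agree_inf_sup z hab
    ((hz'.1 _ _ _ le_rfl).trans (hx.trans (hz.1 _ _ _ le_rfl).symm))
    ((hz'.2 _ _ _ le_rfl).trans (hy.trans (hz.2 _ _ _ le_rfl).symm))

theorem IsBracket.toFun_eq_left_of_agree (hz : IsBracket x y z) {N : Fin k → ℤ} (hN : 0 ≤ N)
    (hagree : ∀ a b (hab : a ≤ b), 0 ≤ a → b ≤ N → x.toFun a b hab = y.toFun a b hab)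
    {a b : Fin k → ℤ} (hab : a ≤ b) (hbN : b ≤ N) :
    z.toFun a b hab = x.toFun a b hab :=
  z.toFun_eq_of_agree_inf_sup x hab (hz.1 _ _ _ le_rfl)
    ((hz.2 _ _ _ le_rfl).trans (hagree _ _ _ le_rfl (sup_le hbN hN)).symm)

theorem IsBracket.toFun_eq_right_of_agree (hz : IsBracket x y z) {N : Fin k → ℤ} (hN : 0 ≤ N)
    (hagree : ∀ a b (hab : a ≤ b), -N ≤ a → b ≤ 0 → x.toFun a b hab = y.toFun a b hab)
    {a b : Fin k → ℤ} (hab : a ≤ b) (haN : -N ≤ a) :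
    z.toFun a b hab = y.toFun a b hab :=
  z.toFun_eq_of_agree_inf_sup y hab
    ((hz.1 _ _ _ le_rfl).trans (hagree _ _ _ (le_inf haN (neg_nonpos.mpr hN)) le_rfl))
    (hz.2 _ _ _ le_rfl)

theorem IsBracket.shift (hz : IsBracket x y z) {N : Fin k → ℤ} (hN : 0 ≤ N)
    (hagree : ∀ a b (hab : a ≤ b), 0 ≤ a → b ≤ N → x.toFun a b hab = y.toFun a b hab) :
    IsBracket (x.shift N) (y.shift N) (z.shift N) :=
  ⟨fun _ _ hmn hn => hz.toFun_eq_left_of_agree hN hagree (add_le_add_left hmn N)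
      (by simpa using add_le_add_right hn N),
    fun _ _ hmn hm => hz.2 _ _ (add_le_add_left hmn N) (add_nonneg hm hN)⟩

theorem IsBracket.shift_neg (hz : IsBracket x y z) {N : Fin k → ℤ} (hN : 0 ≤ N)
    (hagree : ∀ a b (hab : a ≤ b), -N ≤ a → b ≤ 0 → x.toFun a b hab = y.toFun a b hab) :
    IsBracket (x.shift (-N)) (y.shift (-N)) (z.shift (-N)) :=
  ⟨fun _ _ hmn hn => hz.1 _ _ (add_le_add_left hmn _)
      (add_nonpos hn (neg_nonpos.mpr hN)),
    fun _ _ hmn hm => hz.toFun_eq_right_of_agree hN hagree (add_le_add_left hmn _)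
      (by simpa using add_le_add_right hm (-N))⟩

theorem continuous_of_isBracket
    {f : {p : TwoSidedPath Λ × TwoSidedPath Λ // p.1.obj0 = p.2.obj0} → TwoSidedPath Λ}
    (hf : ∀ q, IsBracket q.1.1 q.1.2 (f q)) : Continuous f := by
  rw [continuous_generateFrom_iff]
  rintro _ ⟨lam, n, rfl⟩
  rw [isOpen_iff_forall_mem_open]
  intro q hq
  have hfst : Continuous fun q' : {p : TwoSidedPath Λ × TwoSidedPath Λ //
      p.1.obj0 = p.2.obj0} => q'.1.1 := continuous_fst.comp continuous_subtype_val
  have hsnd : Continuous fun q' : {p : TwoSidedPath Λ × TwoSidedPath Λ //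
      p.1.obj0 = p.2.obj0} => q'.1.2 := continuous_snd.comp continuous_subtype_val
  refine ⟨(fun q' => q'.1.1) ⁻¹'
        {x' | x'.toFun (n ⊓ 0) 0 inf_le_right = q.1.1.toFun _ _ _} ∩
      (fun q' => q'.1.2) ⁻¹'
        {y' | y'.toFun 0 ((n + Λ.degZ lam) ⊔ 0) le_sup_right = q.1.2.toFun _ _ _},
    fun q' ⟨hx, hy⟩ => ((hf q).toFun_eq_of_agree (hf q') _ hx hy).trans hq,
    ((q.1.1.isOpen_setOf_toFun_eq _).preimage hfst).inter
      ((q.1.2.isOpen_setOf_toFun_eq _).preimage hsnd),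
    rfl, rfl⟩

end TwoSidedPath

theorem coeZ_nonneg {k : ℕ} (n : Fin k → ℕ) : 0 ≤ coeZ n :=
  fun i => Int.natCast_nonneg (n i)

theorem bracket_continuous_and_identities_general {k : ℕ} (Λ : KGraph k)
    (bra : ∀ x y : TwoSidedPath Λ, x.obj0 = y.obj0 → TwoSidedPath Λ)
    (hbra : ∀ x y (h : x.obj0 = y.obj0),
      (∀ m n (hmn : m ≤ n), n ≤ 0 → (bra x y h).toFun m n hmn = x.toFun m n hmn) ∧
      (∀ m n (hmn : m ≤ n), 0 ≤ m → (bra x y h).toFun m n hmn = y.toFun m n hmn)) :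
    Continuous (fun q : {p : TwoSidedPath Λ × TwoSidedPath Λ //
        p.1.obj0 = p.2.obj0} => bra q.1.1 q.1.2 q.2) ∧
    (∀ x (h : x.obj0 = x.obj0), bra x x h = x) ∧
    (∀ x y z (hxy : x.obj0 = y.obj0) (hyz : y.obj0 = z.obj0)
        (h1 : (bra x y hxy).obj0 = z.obj0) (h2 : x.obj0 = z.obj0),
      bra (bra x y hxy) z h1 = bra x z h2) ∧
    (∀ x y z (hxy : x.obj0 = y.obj0) (hyz : y.obj0 = z.obj0)
        (h1 : x.obj0 = (bra y z hyz).obj0) (h2 : x.obj0 = z.obj0),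
      bra x (bra y z hyz) h1 = bra x z h2) ∧
    (∀ (n : Fin k → ℕ) (x y : TwoSidedPath Λ) (hxy : x.obj0 = y.obj0),
      (∀ a b (hab : a ≤ b), 0 ≤ a → b ≤ coeZ n → x.toFun a b hab = y.toFun a b hab) →
      ∀ h' : (TwoSidedPath.shift (coeZ n) x).obj0 =
          (TwoSidedPath.shift (coeZ n) y).obj0,
        TwoSidedPath.shift (coeZ n) (bra x y hxy) =
          bra (TwoSidedPath.shift (coeZ n) x) (TwoSidedPath.shift (coeZ n) y) h') ∧
    (∀ (n : Fin k → ℕ) (x y : TwoSidedPath Λ) (hxy : x.obj0 = y.obj0),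
      (∀ a b (hab : a ≤ b), -(coeZ n) ≤ a → b ≤ 0 →
        x.toFun a b hab = y.toFun a b hab) →
      ∀ h' : (TwoSidedPath.shift (-(coeZ n)) x).obj0 =
          (TwoSidedPath.shift (-(coeZ n)) y).obj0,
        TwoSidedPath.shift (-(coeZ n)) (bra x y hxy) =
          bra (TwoSidedPath.shift (-(coeZ n)) x)
            (TwoSidedPath.shift (-(coeZ n)) y) h') := by
  have hB : ∀ x y h, TwoSidedPath.IsBracket x y (bra x y h) := hbra
  refine ⟨TwoSidedPath.continuous_of_isBracket fun q => hB _ _ q.2,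
    fun x h => (hB x x h).unique (TwoSidedPath.isBracket_self x), ?_, ?_, ?_, ?_⟩
  · exact fun x y z hxy _ h1 h2 => ((hB x y hxy).bracket_left (hB _ z h1)).unique (hB x z h2)
  · exact fun x y z _ hyz h1 h2 => ((hB y z hyz).bracket_right (hB x _ h1)).unique (hB x z h2)
  · exact fun n x y hxy hagree h' =>
      ((hB x y hxy).shift (coeZ_nonneg n) hagree).unique (hB _ _ h')
  · exact fun n x y hxy hagree h' =>
      ((hB x y hxy).shift_neg (coeZ_nonneg n) hagree).unique (hB _ _ h')

/-- The bracket map is continuous and satisfies `[x,x] = x`,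
`[[x,y],z] = [x,z]`, `[x,[y,z]] = [x,z]`, and is shift-equivariant:
`σ^n [x,y] = [σ^n x, σ^n y]` (for `n ∈ ℕ^k`, when `x` and `y` agree on
`0 ≤ a ≤ b ≤ n`) and `σ^{-n} [x,y] = [σ^{-n} x, σ^{-n} y]` (when they agree on
`-n ≤ a ≤ b ≤ 0`). -/
theorem bracket_continuous_and_identities {k : ℕ} (hk : 0 < k) (Λ : KGraph k)
    (hstar : Λ.Star)
    (bra : ∀ x y : TwoSidedPath Λ, x.obj0 = y.obj0 → TwoSidedPath Λ)
    (hbra : ∀ x y (h : x.obj0 = y.obj0),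
      (∀ m n (hmn : m ≤ n), n ≤ 0 → (bra x y h).toFun m n hmn = x.toFun m n hmn) ∧
      (∀ m n (hmn : m ≤ n), 0 ≤ m → (bra x y h).toFun m n hmn = y.toFun m n hmn)) :
    Continuous (fun q : {p : TwoSidedPath Λ × TwoSidedPath Λ //
        p.1.obj0 = p.2.obj0} => bra q.1.1 q.1.2 q.2) ∧
    (∀ x (h : x.obj0 = x.obj0), bra x x h = x) ∧
    (∀ x y z (hxy : x.obj0 = y.obj0) (hyz : y.obj0 = z.obj0)
        (h1 : (bra x y hxy).obj0 = z.obj0) (h2 : x.obj0 = z.obj0),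
      bra (bra x y hxy) z h1 = bra x z h2) ∧
    (∀ x y z (hxy : x.obj0 = y.obj0) (hyz : y.obj0 = z.obj0)
        (h1 : x.obj0 = (bra y z hyz).obj0) (h2 : x.obj0 = z.obj0),
      bra x (bra y z hyz) h1 = bra x z h2) ∧
    (∀ (n : Fin k → ℕ) (x y : TwoSidedPath Λ) (hxy : x.obj0 = y.obj0),
      (∀ a b (hab : a ≤ b), 0 ≤ a → b ≤ coeZ n → x.toFun a b hab = y.toFun a b hab) →
      ∀ h' : (TwoSidedPath.shift (coeZ n) x).obj0 =
          (TwoSidedPath.shift (coeZ n) y).obj0,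
        TwoSidedPath.shift (coeZ n) (bra x y hxy) =
          bra (TwoSidedPath.shift (coeZ n) x) (TwoSidedPath.shift (coeZ n) y) h') ∧
    (∀ (n : Fin k → ℕ) (x y : TwoSidedPath Λ) (hxy : x.obj0 = y.obj0),
      (∀ a b (hab : a ≤ b), -(coeZ n) ≤ a → b ≤ 0 →
        x.toFun a b hab = y.toFun a b hab) →
      ∀ h' : (TwoSidedPath.shift (-(coeZ n)) x).obj0 =
          (TwoSidedPath.shift (-(coeZ n)) y).obj0,
        TwoSidedPath.shift (-(coeZ n)) (bra x y hxy) =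
          bra (TwoSidedPath.shift (-(coeZ n)) x)
            (TwoSidedPath.shift (-(coeZ n)) y) h') :=
  bracket_continuous_and_identities_general Λ bra hbra
end
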